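/- Suppose d^μ_β is a semimetric. Then P^μ_β satisfies the majority principle: for every profile V = (v¹,…,vᵐ) and every candidate c ∈ [n], if the number of voters who rank c first minus the number of voters who do not rank c first is nonnegative, then c ∈ W^μ_β(V). -/

import Mathlib

/-!
Take a median ranking `σ` and move `c` to the top, leaving the relative order of the other
candidates unchanged; call the result `σ'`. On menus without `c` the two rankings pick the same
top, and on menus containing `c` the ranking `σ'` picks `c`, as does every voter ranking `c` first.
So `σ'` lies between `σ` and each such voter: their distance splits as `d(σ, σ') + d(σ', v)`,
while for every other voter the triangle inequality costs at most `d(σ, σ')`. When at least half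
of the voters rank `c` first, the gains outweigh the losses, so `σ'` is a median ranking too.
-/

open Finset

noncomputable section

/-- `i >_σ j`: candidate `i` is ranked above candidate `j` by `σ`
(where `σ i` is the candidate in position `i`). -/
def prefOver {n : ℕ} (σ : Equiv.Perm (Fin n)) (i j : Fin n) : Prop :=
  σ.symm i < σ.symm j

/-- `M(S,σ)`: the set of `>_σ`-maximal elements of `S` (a singleton when `S ≠ ∅`). -/
def bestSet {n : ℕ} (σ : Equiv.Perm (Fin n)) (S : Finset (Fin n)) : Finset (Fin n) :=
  S.filter fun x => ∀ y ∈ S, σ.symm x ≤ σ.symm y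

/-- `△_S(σ,π) = M(S,σ) △ M(S,π)`. -/
def topDiff {n : ℕ} (σ π : Equiv.Perm (Fin n)) (S : Finset (Fin n)) : Finset (Fin n) :=
  symmDiff (bestSet σ S) (bestSet π S)

/-- The `(β,μ)`-top-difference distance; `β i` is the weight of menus of size `i+2`. -/
def dTD (n : ℕ) (β : Fin (n - 1) → ℝ) (μ : Fin n → ℝ)
    (σ π : Equiv.Perm (Fin n)) : ℝ :=
  ∑ S ∈ Finset.univ.filter (fun S : Finset (Fin n) => 2 ≤ S.card),
    (if h : S.card - 2 < n - 1 then β ⟨S.card - 2, h⟩ else 0) *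
      ∑ x ∈ topDiff σ π S, μ x

def IsSemimetric {α : Type*} (d : α → α → ℝ) : Prop :=
  (∀ x y, 0 ≤ d x y) ∧ (∀ x y, d x y = d y x) ∧ (∀ x, d x x = 0) ∧
    (∀ x y z, d x z ≤ d x y + d y z)

def IsMetricFn {α : Type*} (d : α → α → ℝ) : Prop :=
  IsSemimetric d ∧ ∀ x y, d x y = 0 → x = y

/-- Cumulative distance of `σ` to a profile of voters. -/
def dProf (n : ℕ) (β : Fin (n - 1) → ℝ) (μ : Fin n → ℝ)
    (σ : Equiv.Perm (Fin n)) (V : List (Equiv.Perm (Fin n))) : ℝ :=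
  (V.map (dTD n β μ σ)).sum

/-- The median preference correspondence `P^μ_β`. -/
def Pmed (n : ℕ) (β : Fin (n - 1) → ℝ) (μ : Fin n → ℝ)
    (V : List (Equiv.Perm (Fin n))) : Set (Equiv.Perm (Fin n)) :=
  {σ | ∀ τ : Equiv.Perm (Fin n), dProf n β μ σ V ≤ dProf n β μ τ V}

/-- The winner set `W^μ_β`: candidates ranked first by some consensus ranking. -/
def Wmed (n : ℕ) (hn : 0 < n) (β : Fin (n - 1) → ℝ) (μ : Fin n → ℝ)
    (V : List (Equiv.Perm (Fin n))) : Set (Fin n) :=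
  {c | ∃ σ ∈ Pmed n β μ V, σ ⟨0, hn⟩ = c}

open Equiv

theorem List.sum_map_le_sum_map_of_le_two_mul_countP {α : Type*} (V : List α) (p : α → Bool)
    {f g : α → ℝ} {D : ℝ} (hD : 0 ≤ D) (hp : ∀ v, p v → g v + D ≤ f v)
    (hnp : ∀ v, ¬p v → g v ≤ f v + D) (hmaj : V.length ≤ 2 * V.countP p) :
    (V.map g).sum ≤ (V.map f).sum := by
  have key : ∀ W : List α,
      (W.map g).sum + W.countP p * D ≤ (W.map f).sum + (W.length - W.countP p : ℝ) * D := by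
    intro W
    induction W with
    | nil => simp
    | cons v W ih =>
      simp only [List.map_cons, List.sum_cons, List.countP_cons, List.length_cons]
      by_cases hv : p v
      · have := hp v hv
        simp only [hv, if_true]
        push_cast
        linarith
      · have := hnp v hv
        simp only [hv]
        push_cast
        linarith
  have hcount : (V.length - V.countP p : ℝ) ≤ V.countP p := by
    have : (V.length : ℝ) ≤ 2 * V.countP p := by exact_mod_cast hmaj
    linarith
  linarith [key V, mul_le_mul_of_nonneg_right hcount hD]

namespace Fin

theorem coe_cycleRange_of_ne {n : ℕ} {i j : Fin n} (h : j ≠ i) :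
    (cycleRange i j : ℕ) = if j < i then (j : ℕ) + 1 else j := by
  split_ifs with hji
  · exact coe_cycleRange_of_lt hji
  · rw [cycleRange_of_gt (lt_of_le_of_ne (not_lt.mp hji) (Ne.symm h))]

theorem cycleRange_le_cycleRange_iff {n : ℕ} {i j k : Fin n} (hj : j ≠ i) (hk : k ≠ i) :
    cycleRange i j ≤ cycleRange i k ↔ j ≤ k := by
  have hj' : (j : ℕ) ≠ i := Fin.val_ne_of_ne hj
  have hk' : (k : ℕ) ≠ i := Fin.val_ne_of_ne hk
  rw [Fin.le_def, Fin.le_def, coe_cycleRange_of_ne hj, coe_cycleRange_of_ne hk]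
  split_ifs with hji hki hki <;> rw [Fin.lt_def] at * <;> omega

theorem cycleRange_self_le {n : ℕ} (i j : Fin n) : cycleRange i i ≤ j := by
  rw [Fin.le_def, coe_cycleRange_of_le le_rfl, if_pos rfl]
  exact Nat.zero_le _

end Fin

section Rankings

variable {n : ℕ}

theorem bestSet_eq_singleton_of_forall_le {π : Perm (Fin n)} {S : Finset (Fin n)} {c : Fin n}
    (hc : ∀ y, π.symm c ≤ π.symm y) (hcS : c ∈ S) : bestSet π S = {c} := by
  ext x
  simp only [bestSet, mem_filter, mem_singleton]
  constructor
  · rintro ⟨-, hx⟩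
    exact π.symm.injective (le_antisymm (hx c hcS) (hc x))
  · rintro rfl
    exact ⟨hcS, fun y _ => hc y⟩

theorem bestSet_congr {σ π : Perm (Fin n)} {S : Finset (Fin n)}
    (h : ∀ x ∈ S, ∀ y ∈ S, (σ.symm x ≤ σ.symm y ↔ π.symm x ≤ π.symm y)) :
    bestSet σ S = bestSet π S := by
  ext x
  simp only [bestSet, mem_filter]
  exact and_congr_right fun hx => forall₂_congr fun y hy => h x hx y hy

theorem dTD_eq_add_of_bestSet (β : Fin (n - 1) → ℝ) (μ : Fin n → ℝ) {σ π τ : Perm (Fin n)}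
    (h : ∀ S, bestSet π S = bestSet σ S ∨ bestSet π S = bestSet τ S) :
    dTD n β μ σ τ = dTD n β μ σ π + dTD n β μ π τ := by
  unfold dTD
  rw [← sum_add_distrib]
  refine sum_congr rfl fun S _ => ?_
  rw [← mul_add]
  congr 1
  rcases h S with h | h <;> simp [topDiff, h]

/-- The candidates that `σ` ranks above `c` each move one position down, the others keep their
positions. -/
def moveToTop (σ : Perm (Fin n)) (c : Fin n) : Perm (Fin n) :=
  (σ.symm.trans (Fin.cycleRange (σ.symm c))).symm

theorem moveToTop_symm_apply (σ : Perm (Fin n)) (c x : Fin n) :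
    (moveToTop σ c).symm x = Fin.cycleRange (σ.symm c) (σ.symm x) := by
  simp [moveToTop]

theorem moveToTop_symm_apply_self_le (σ : Perm (Fin n)) (c y : Fin n) :
    (moveToTop σ c).symm c ≤ (moveToTop σ c).symm y := by
  rw [moveToTop_symm_apply]
  exact Fin.cycleRange_self_le _ _

theorem moveToTop_apply_zero (σ : Perm (Fin n)) (c : Fin n) (h : 0 < n) :
    moveToTop σ c ⟨0, h⟩ = c := by
  rw [← Equiv.eq_symm_apply, moveToTop_symm_apply]
  ext
  rw [Fin.coe_cycleRange_of_le le_rfl, if_pos rfl]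

theorem bestSet_moveToTop_of_mem (σ : Perm (Fin n)) {c : Fin n} {S : Finset (Fin n)}
    (hcS : c ∈ S) : bestSet (moveToTop σ c) S = {c} :=
  bestSet_eq_singleton_of_forall_le (moveToTop_symm_apply_self_le σ c) hcS

theorem bestSet_moveToTop_of_notMem (σ : Perm (Fin n)) {c : Fin n} {S : Finset (Fin n)}
    (hcS : c ∉ S) : bestSet (moveToTop σ c) S = bestSet σ S := by
  refine bestSet_congr fun x hx y hy => ?_
  have hne : ∀ z ∈ S, σ.symm z ≠ σ.symm c := fun z hz h =>
    hcS (σ.symm.injective h ▸ hz)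
  rw [moveToTop_symm_apply, moveToTop_symm_apply,
    Fin.cycleRange_le_cycleRange_iff (hne x hx) (hne y hy)]

theorem dTD_eq_add_moveToTop (β : Fin (n - 1) → ℝ) (μ : Fin n → ℝ) (σ : Perm (Fin n))
    {v : Perm (Fin n)} {c : Fin n} (h : 0 < n) (hv : v ⟨0, h⟩ = c) :
    dTD n β μ σ v = dTD n β μ σ (moveToTop σ c) + dTD n β μ (moveToTop σ c) v := by
  have hvc : ∀ y, v.symm c ≤ v.symm y := fun y => by
    rw [← hv, symm_apply_apply]
    exact Fin.le_def.mpr (Nat.zero_le _)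
  refine dTD_eq_add_of_bestSet β μ fun S => ?_
  by_cases hcS : c ∈ S
  · right
    rw [bestSet_moveToTop_of_mem σ hcS, bestSet_eq_singleton_of_forall_le hvc hcS]
  · left
    exact bestSet_moveToTop_of_notMem σ hcS

theorem dProf_moveToTop_le {β : Fin (n - 1) → ℝ} {μ : Fin n → ℝ} (hd : IsSemimetric (dTD n β μ))
    (σ : Perm (Fin n)) (V : List (Perm (Fin n))) (c : Fin n) (h : 0 < n)
    (hmaj : V.length ≤ 2 * V.countP fun v => decide (v ⟨0, h⟩ = c)) :
    dProf n β μ (moveToTop σ c) V ≤ dProf n β μ σ V := by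
  obtain ⟨hnonneg, hsymm, -, htri⟩ := hd
  refine V.sum_map_le_sum_map_of_le_two_mul_countP _ (hnonneg σ (moveToTop σ c)) ?_ ?_ hmaj
  · intro v hv
    rw [dTD_eq_add_moveToTop β μ σ h (of_decide_eq_true hv), add_comm]
  · intro v _
    linarith [htri (moveToTop σ c) σ v, hsymm σ (moveToTop σ c)]

end Rankings

theorem stmt14 (n : ℕ) (hn : 2 ≤ n) (β : Fin (n - 1) → ℝ) (μ : Fin n → ℝ)
    (hd : IsSemimetric (dTD n β μ))
    (V : List (Equiv.Perm (Fin n))) (c : Fin n)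
    (hmaj :
      0 ≤ ((V.countP fun v => decide (v ⟨0, by omega⟩ = c)) : ℤ) -
        ((V.length : ℤ) - ((V.countP fun v => decide (v ⟨0, by omega⟩ = c)) : ℤ))) :
    c ∈ Wmed n (by omega) β μ V := by
  obtain ⟨σ, -, hmin⟩ := exists_min_image univ (dProf n β μ · V) univ_nonempty
  have hmaj' : V.length ≤ 2 * V.countP fun v => decide (v ⟨0, by omega⟩ = c) := by omega
  exact ⟨moveToTop σ c, fun τ => (dProf_moveToTop_le hd σ V c _ hmaj').trans (hmin τ (mem_univ τ)),
    moveToTop_apply_zero σ c _⟩
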